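/- arXiv:2107.01424 — 3 statements merged into one kernel-verified Lean document; each statement's English description precedes it below -/
import Mathlib

section
/- For every integer n ≥ 3, the semitotal domination number of the path P_n on n vertices equals ⌈2n/5⌉, i.e., γ_t2(P_n) = ⌈2n/5⌉. -/
open SimpleGraph

/-- `D` is a dominating set of `G`: every vertex not in `D` is adjacent to a vertex of `D`. -/
def IsDomSet {V : Type*} (G : SimpleGraph V) (D : Set V) : Prop :=
  ∀ v, v ∉ D → ∃ u ∈ D, G.Adj u v

/-- `D` is a semitotal dominating set of `G`: it is a dominating set and every vertex of `D`
is within distance 2 from another vertex of `D`. -/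
def IsSemitotalDomSet {V : Type*} (G : SimpleGraph V) (D : Set V) : Prop :=
  IsDomSet G D ∧
    ∀ v ∈ D, ∃ u ∈ D, u ≠ v ∧ (G.Adj u v ∨ ∃ w, G.Adj u w ∧ G.Adj w v)

/-- The semitotal domination number: the minimum cardinality of a semitotal dominating set. -/
noncomputable def semitotalDomNum {V : Type*} (G : SimpleGraph V) [Fintype V] : ℕ :=
  sInf {k | ∃ D : Finset V, IsSemitotalDomSet G ↑D ∧ D.card = k}

/-- The domination number: the minimum cardinality of a dominating set. -/
noncomputable def domNum {V : Type*} (G : SimpleGraph V) [Fintype V] : ℕ :=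
  sInf {k | ∃ D : Finset V, IsDomSet G ↑D ∧ D.card = k}

/-- The number of semitotal dominating sets of cardinality `i`. -/
noncomputable def numSemitotalDomSets {V : Type*} (G : SimpleGraph V) [Fintype V] (i : ℕ) : ℕ :=
  Set.ncard {D : Finset V | IsSemitotalDomSet G ↑D ∧ D.card = i}

/-- The number of dominating sets of cardinality `i`. -/
noncomputable def numDomSets {V : Type*} (G : SimpleGraph V) [Fintype V] (i : ℕ) : ℕ :=
  Set.ncard {D : Finset V | IsDomSet G ↑D ∧ D.card = i}

lemma pair_sum (g : ℕ → ℕ) (m : ℕ) (h0 : g 0 ≤ 2) (hl : g m ≤ 2)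
    (hp : ∀ i < m, g i + g (i+1) ≤ 5) :
    2 * ∑ i ∈ Finset.range (m+1), g i ≤ 5 * (m+1) - 1 := by
  have h1 : ∑ i ∈ Finset.range (m+1), g i
      = ∑ i ∈ Finset.range m, g (i+1) + g 0 := Finset.sum_range_succ' g m
  have h2 : ∑ i ∈ Finset.range (m+1), g i = ∑ i ∈ Finset.range m, g i + g m :=
    Finset.sum_range_succ g m
  have h3 : ∑ i ∈ Finset.range m, g i + ∑ i ∈ Finset.range m, g (i+1)
      = ∑ i ∈ Finset.range m, (g i + g (i+1)) := Finset.sum_add_distrib.symm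
  have h4 : ∑ i ∈ Finset.range m, (g i + g (i+1)) ≤ ∑ i ∈ Finset.range m, 5 :=
    Finset.sum_le_sum (fun i hi => hp i (Finset.mem_range.mp hi))
  simp only [Finset.sum_const, Finset.card_range, smul_eq_mul] at h4
  omega

lemma lower_bound {n : ℕ} (hn : 3 ≤ n) (D : Finset (Fin n))
    (hD : IsSemitotalDomSet (pathGraph n) ↑D) : 2 * n ≤ 5 * D.card := by
  obtain ⟨hdom, hsemi⟩ := hD
  set k := D.card with hk
  have hne : ∃ x, x ∈ D := by
    by_cases h : (⟨0, by omega⟩ : Fin n) ∈ D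
    · exact ⟨_, h⟩
    · obtain ⟨u, hu, -⟩ := hdom _ h
      exact ⟨u, hu⟩
  have hk2 : 2 ≤ k := by
    obtain ⟨x, hx⟩ := hne
    obtain ⟨u, hu, hux, -⟩ := hsemi x hx
    exact Finset.one_lt_card.mpr ⟨u, hu, x, hx, hux⟩
  set emb := D.orderEmbOfFin hk.symm with hemb
  have hmem : ∀ x ∈ D, ∃ i : Fin k, emb i = x := by
    intro x hx
    have : x ∈ Set.range emb := by
      rw [Finset.range_orderEmbOfFin]; exact_mod_cast hx
    exact this
  set F : ℕ → ℕ := fun i => (emb ⟨min i (k-1), by omega⟩).val with hF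
  have hFval : ∀ (i : ℕ) (h : i < k), F i = (emb ⟨i, h⟩).val := by
    intro i h
    have h2 : min i (k-1) = i := by omega
    simp only [hF, h2]
  have hFmono : Monotone F := by
    intro i j hij
    simp only [hF]
    exact Fin.le_def.mp (emb.monotone (Fin.mk_le_mk.mpr (by omega)))
  have hFstrict : ∀ i, i + 1 < k → F i < F (i+1) := by
    intro i h
    rw [hFval i (by omega), hFval (i+1) h]
    exact Fin.lt_def.mp (emb.strictMono (Fin.mk_lt_mk.mpr (by omega)))
  have hFlt : ∀ i, F i < n := fun i => (emb _).isLt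
  have hFmem : ∀ i, i < k → ∃ x ∈ D, (x : Fin n).val = F i := by
    intro i h
    exact ⟨emb ⟨i, h⟩, Finset.orderEmbOfFin_mem D hk.symm ⟨i, h⟩, (hFval i h).symm⟩
  have hmin : ∀ x ∈ D, F 0 ≤ x.val := by
    intro x hx
    obtain ⟨i, hi⟩ := hmem x hx
    rw [← hi, hFval 0 (by omega)]
    exact Fin.le_def.mp (emb.monotone (Fin.mk_le_mk.mpr (by omega)))
  have hmax : ∀ x ∈ D, x.val ≤ F (k-1) := by
    intro x hx
    obtain ⟨i, hi⟩ := hmem x hx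
    rw [← hi, hFval (k-1) (by omega)]
    exact Fin.le_def.mp (emb.monotone (Fin.mk_le_mk.mpr (by omega)))
  have hdich : ∀ i, i + 1 < k → ∀ x ∈ D, x.val ≤ F i ∨ F (i+1) ≤ x.val := by
    intro i h x hx
    obtain ⟨j, hj⟩ := hmem x hx
    rw [← hj]
    by_cases hji : j.val ≤ i
    · left
      rw [hFval i (by omega)]
      exact Fin.le_def.mp (emb.monotone (Fin.mk_le_mk.mpr (by omega)))
    · right
      rw [hFval (i+1) h]
      exact Fin.le_def.mp (emb.monotone (Fin.mk_le_mk.mpr (by omega)))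
  -- domination at the value level
  have hdomval : ∀ m (hm : m < n), (⟨m, hm⟩ : Fin n) ∈ D ∨
      ∃ u ∈ D, (u : Fin n).val + 1 = m ∨ m + 1 = (u : Fin n).val := by
    intro m hm
    by_cases h : (⟨m, hm⟩ : Fin n) ∈ D
    · exact Or.inl h
    · obtain ⟨u, hu, hadj⟩ := hdom _ h
      rw [pathGraph_adj] at hadj
      exact Or.inr ⟨u, hu, hadj⟩
  have hF0 : F 0 ≤ 1 := by
    rcases hdomval 0 (by omega) with h | ⟨u, hu, hadj⟩
    · have h0 : F 0 ≤ 0 := hmin _ h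
      omega
    · have h0 : F 0 ≤ u.val := hmin _ hu
      omega
  have hFlast : n ≤ F (k-1) + 2 := by
    rcases hdomval (n-1) (by omega) with h | ⟨u, hu, hadj⟩
    · have h0 : n - 1 ≤ F (k-1) := hmax _ h
      omega
    · have h0 : u.val ≤ F (k-1) := hmax _ hu
      omega
  have hgap : ∀ i, i + 1 < k → F (i+1) ≤ F i + 3 := by
    intro i h
    by_contra hc
    push_neg at hc
    have h1 := hFlt (i+1)
    have hvn : F i + 2 < n := by omega
    rcases hdomval (F i + 2) hvn with hmem2 | ⟨u, hu, hadj⟩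
    · have hv : ((⟨F i + 2, hvn⟩ : Fin n) : ℕ) = F i + 2 := rfl
      rcases hdich i h _ hmem2 with h1 | h1 <;> omega
    · rcases hdich i h u hu with h1 | h1 <;> omega
  have hnear : ∀ i, i < k → ∃ u ∈ D, (u : Fin n).val ≠ F i ∧
      (u : Fin n).val ≤ F i + 2 ∧ F i ≤ (u : Fin n).val + 2 := by
    intro i h
    obtain ⟨x, hx, hxv⟩ := hFmem i h
    obtain ⟨u, hu, hune, hadj⟩ := hsemi x hx
    refine ⟨u, hu, ?_, ?_⟩
    · intro hval
      exact hune (Fin.ext (by omega))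
    · rcases hadj with hadj | ⟨w, hw1, hw2⟩
      · rw [pathGraph_adj] at hadj; omega
      · rw [pathGraph_adj] at hw1 hw2; omega
  have he0 : F 1 ≤ F 0 + 2 := by
    obtain ⟨u, hu, hne', h2, -⟩ := hnear 0 (by omega)
    have h3 := hmin u hu
    have h4 := hdich 0 (by omega) u hu
    simp only [zero_add] at h4
    omega
  have helast : F (k-1) ≤ F (k-2) + 2 := by
    obtain ⟨u, hu, hne', -, h2⟩ := hnear (k-1) (by omega)
    have h3 := hmax u hu
    have hd := hdich (k-2) (by omega) u hu
    have he : k - 2 + 1 = k - 1 := by omega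
    rw [he] at hd
    rcases hd with h1 | h1 <;> omega
  have hpair : ∀ i, i + 2 < k →
      (F (i+1) - F i) + (F (i+2) - F (i+1)) ≤ 5 := by
    intro i h
    obtain ⟨u, hu, hne', h2, h2'⟩ := hnear (i+1) (by omega)
    have hg1 := hgap i (by omega)
    have hg2 := hgap (i+1) (by omega)
    have hs1 := hFstrict i (by omega)
    have hs2 := hFstrict (i+1) (by omega)
    have hd1 := hdich i (by omega) u hu
    have hd2 := hdich (i+1) (by omega) u hu
    have he1 : i + 1 + 1 = i + 2 := rfl
    rw [he1] at hg2 hs2 hd2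
    omega
  have hsum : 2 * (F (k-1) - F 0) ≤ 5 * (k-1) - 1 := by
    have htel : ∑ i ∈ Finset.range (k-1), (F (i+1) - F i) = F (k-1) - F 0 :=
      Finset.sum_range_tsub hFmono (k-1)
    have hm1 : k - 1 = (k - 2) + 1 := by omega
    rw [← htel, hm1]
    apply pair_sum (fun i => F (i+1) - F i) (k-2)
    · show F (0+1) - F 0 ≤ 2
      simp only [zero_add]
      omega
    · show F (k-2+1) - F (k-2) ≤ 2
      have he : k - 2 + 1 = k - 1 := by omega
      rw [he]
      omega
    · intro i hi
      show (F (i+1) - F i) + (F (i+1+1) - F (i+1)) ≤ 5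
      have he1 : i + 1 + 1 = i + 2 := rfl
      rw [he1]
      exact hpair i (by omega)
  have hm : F 0 ≤ F (k-1) := hFmono (by omega)
  omega

lemma step {n : ℕ} (hn : 3 ≤ n) (D : Finset (Fin n))
    (hD : IsSemitotalDomSet (pathGraph n) ↑D) :
    ∃ D' : Finset (Fin (n+5)), IsSemitotalDomSet (pathGraph (n+5)) ↑D' ∧
      D'.card = D.card + 2 := by
  obtain ⟨hdom, hsemi⟩ := hD
  have h5 : n ≤ n + 5 := by omega
  set a : Fin (n+5) := ⟨n+1, by omega⟩ with ha
  set b : Fin (n+5) := ⟨n+3, by omega⟩ with hb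
  set E : Finset (Fin (n+5)) := D.map (Fin.castLEEmb h5) with hE
  have hEval : ∀ x ∈ E, (x : Fin (n+5)).val < n := by
    intro x hx
    rw [hE, Finset.mem_map] at hx
    obtain ⟨y, hy, rfl⟩ := hx
    exact y.isLt
  have hmemE : ∀ y : Fin n, y ∈ D → (Fin.castLE h5 y) ∈ E := by
    intro y hy
    rw [hE, Finset.mem_map]
    exact ⟨y, hy, rfl⟩
  set D' : Finset (Fin (n+5)) := insert a (insert b E) with hD'
  have hmem' : ∀ x : Fin (n+5), x ∈ D' ↔ x = a ∨ x = b ∨ ∃ y ∈ D, Fin.castLE h5 y = x := by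
    intro x
    simp [hD', hE, Finset.mem_insert, Finset.mem_map]
  have hab : a ≠ b := Fin.ne_of_val_ne (show n+1 ≠ n+3 by omega)
  refine ⟨D', ⟨?_, ?_⟩, ?_⟩
  · -- dominating
    intro v hv
    have hv' : v ∉ D' := hv
    by_cases hvn : v.val < n
    · set v₀ : Fin n := ⟨v.val, hvn⟩ with hv₀
      have hcast : Fin.castLE h5 v₀ = v := by
        apply Fin.ext; rfl
      have hv₀D : v₀ ∉ D := by
        intro h
        exact hv' ((hmem' v).mpr (Or.inr (Or.inr ⟨v₀, h, hcast⟩)))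
      obtain ⟨u, hu, hadj⟩ := hdom v₀ hv₀D
      refine ⟨Fin.castLE h5 u, ?_, ?_⟩
      · exact (hmem' _).mpr (Or.inr (Or.inr ⟨u, hu, rfl⟩))
      · rw [pathGraph_adj] at hadj ⊢
        simpa using hadj
    · have hc : v.val = n ∨ v.val = n+1 ∨ v.val = n+2 ∨ v.val = n+3 ∨ v.val = n+4 := by
        have := v.isLt; omega
      rcases hc with h | h | h | h | h
      · exact ⟨a, (hmem' a).mpr (Or.inl rfl), by rw [pathGraph_adj]; right; simp [ha, h]⟩
      · exact absurd ((hmem' v).mpr (Or.inl (Fin.ext h))) hv'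
      · exact ⟨a, (hmem' a).mpr (Or.inl rfl), by rw [pathGraph_adj]; left; simp [ha, h]⟩
      · exact absurd ((hmem' v).mpr (Or.inr (Or.inl (Fin.ext h)))) hv'
      · exact ⟨b, (hmem' b).mpr (Or.inr (Or.inl rfl)), by
          rw [pathGraph_adj]; left; simp [hb, h]⟩
  · -- semitotal
    intro v hv
    have hv' : v ∈ D' := hv
    rcases (hmem' v).mp hv' with rfl | rfl | ⟨y, hy, rfl⟩
    · refine ⟨b, (hmem' b).mpr (Or.inr (Or.inl rfl)), ?_, ?_⟩
      · exact hab.symm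
      · right
        exact ⟨⟨n+2, by omega⟩, by rw [pathGraph_adj]; exact Or.inr rfl,
          by rw [pathGraph_adj]; exact Or.inr rfl⟩
    · refine ⟨a, (hmem' a).mpr (Or.inl rfl), ?_, ?_⟩
      · exact hab
      · right
        exact ⟨⟨n+2, by omega⟩, by rw [pathGraph_adj]; exact Or.inl rfl,
          by rw [pathGraph_adj]; exact Or.inl rfl⟩
    · obtain ⟨u, hu, hune, hadj⟩ := hsemi y hy
      refine ⟨Fin.castLE h5 u, (hmem' _).mpr (Or.inr (Or.inr ⟨u, hu, rfl⟩)), ?_, ?_⟩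
      · intro h
        exact hune (by
          apply Fin.ext
          have := congrArg Fin.val h
          simpa using this)
      · rcases hadj with hadj | ⟨w, hw1, hw2⟩
        · left
          rw [pathGraph_adj] at hadj ⊢
          simpa using hadj
        · right
          refine ⟨Fin.castLE h5 w, ?_, ?_⟩ <;>
            (rw [pathGraph_adj] at *; simp_all)
  · -- cardinality
    have hbE : b ∉ E := by
      intro h
      have := hEval b h
      simp [hb] at this
    have haE : a ∉ insert b E := by
      intro h
      rcases Finset.mem_insert.mp h with h | h
      · exact absurd (congrArg Fin.val h) (by simp [ha, hb])
      · have := hEval a h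
        simp [ha] at this
    rw [hD', Finset.card_insert_of_notMem haE, Finset.card_insert_of_notMem hbE,
      Finset.card_map]

lemma stdom_base (n : ℕ) (h3 : 3 ≤ n) (h8 : n < 8) :
    ∃ D : Finset (Fin n), IsSemitotalDomSet (pathGraph n) ↑D ∧ D.card = (2*n+4)/5 := by
  interval_cases n
  · refine ⟨({1, 2} : Finset (Fin 3)), ?_, by decide⟩
    simp only [IsSemitotalDomSet, IsDomSet, Finset.mem_coe, pathGraph_adj]
    decide
  · refine ⟨({1, 3} : Finset (Fin 4)), ?_, by decide⟩
    simp only [IsSemitotalDomSet, IsDomSet, Finset.mem_coe, pathGraph_adj]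
    decide
  · refine ⟨({1, 3} : Finset (Fin 5)), ?_, by decide⟩
    simp only [IsSemitotalDomSet, IsDomSet, Finset.mem_coe, pathGraph_adj]
    decide
  · refine ⟨({1, 3, 5} : Finset (Fin 6)), ?_, by decide⟩
    simp only [IsSemitotalDomSet, IsDomSet, Finset.mem_coe, pathGraph_adj]
    decide
  · refine ⟨({1, 3, 5} : Finset (Fin 7)), ?_, by decide⟩
    simp only [IsSemitotalDomSet, IsDomSet, Finset.mem_coe, pathGraph_adj]
    decide

lemma stdom_upper (n : ℕ) (hn : 3 ≤ n) :
    ∃ D : Finset (Fin n), IsSemitotalDomSet (pathGraph n) ↑D ∧ D.card = (2*n+4)/5 := by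
  induction n using Nat.strong_induction_on with
  | _ n ih =>
    by_cases h : n < 8
    · exact stdom_base n hn h
    · obtain ⟨m, rfl⟩ : ∃ m, n = m + 5 := ⟨n - 5, by omega⟩
      obtain ⟨D, hD, hc⟩ := ih m (by omega) (by omega)
      obtain ⟨D', hD', hc'⟩ := step (by omega) D hD
      exact ⟨D', hD', by rw [hc', hc]; omega⟩

/-- For every integer `n ≥ 3`, the semitotal domination number of the path `Pₙ` on `n`
vertices equals `⌈2n/5⌉` (written as `(2 * n + 4) / 5` using natural division). -/
theorem semitotalDomNum_pathGraph (n : ℕ) (hn : 3 ≤ n) :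
    semitotalDomNum (SimpleGraph.pathGraph n) = (2 * n + 4) / 5 := by
  obtain ⟨D, hD, hc⟩ := stdom_upper n hn
  have hne : {k | ∃ D : Finset (Fin n),
      IsSemitotalDomSet (pathGraph n) ↑D ∧ D.card = k}.Nonempty := ⟨_, D, hD, hc⟩
  have h1 : semitotalDomNum (pathGraph n) ≤ (2 * n + 4) / 5 :=
    Nat.sInf_le ⟨D, hD, hc⟩
  obtain ⟨D', hD', hc'⟩ := Nat.sInf_mem hne
  have h2 := lower_bound hn D' hD'
  have h3 : semitotalDomNum (pathGraph n) = D'.card := hc'.symm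
  omega
end

section
/- For every integer n ≥ 3, the semitotal domination number of the cycle C_n on n vertices equals ⌈2n/5⌉, i.e., γ_t2(C_n) = ⌈2n/5⌉. -/
open SimpleGraph

/-! Send each vertex `u` of the cycle to a vertex of `D` in its closed neighbourhood, preferring
`u` itself, then `u + 1`. Every fibre has at most three vertices. If the fibre of `d` is full,
then `d - 1`, `d + 1` and `d + 2` lie outside `D`, so semitotality forces `d - 2 ∈ D`; the fibre
of `d - 2` misses `d - 1` and has at most two vertices. Thus `d ↦ d - 2` injects the full fibres
into the others, and `n ≤ 5|D|/2`. Conversely, the vertices `≡ 0, 2 (mod 5)` form a semitotal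
dominating set of size `⌈2n/5⌉`. -/

open Finset

lemma two_mul_sum_le_five_mul_card {α : Type*} {s : Finset α} {w : α → ℕ} (φ : α → α)
    (hw : ∀ a ∈ s, w a ≤ 3) (hφ : ∀ a ∈ s, w a = 3 → φ a ∈ s ∧ w (φ a) ≤ 2)
    (hinj : Set.InjOn φ s) :
    2 * ∑ a ∈ s, w a ≤ 5 * #s := by
  have hFR : #{a ∈ s | w a = 3} ≤ #{a ∈ s | ¬w a = 3} := by
    refine card_le_card_of_injOn φ (fun a ha => ?_)
      (hinj.mono (coe_subset.mpr (filter_subset _ _)))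
    obtain ⟨has, ha3⟩ := mem_filter.mp ha
    obtain ⟨hφs, hφ2⟩ := hφ a has ha3
    exact mem_filter.mpr ⟨hφs, by omega⟩
  have hF : ∑ a ∈ s with w a = 3, w a = 3 * #{a ∈ s | w a = 3} := by
    rw [sum_congr rfl fun a ha => (mem_filter.mp ha).2, sum_const, smul_eq_mul, mul_comm]
  have hR : ∑ a ∈ s with ¬w a = 3, w a ≤ 2 * #{a ∈ s | ¬w a = 3} := by
    rw [mul_comm, ← smul_eq_mul]
    refine sum_le_card_nsmul _ _ _ fun a ha => ?_
    obtain ⟨has, ha3⟩ := mem_filter.mp ha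
    have := hw a has
    omega
  rw [← sum_filter_add_sum_filter_not s (w · = 3),
    ← card_filter_add_card_filter_not (w · = 3)]
  omega

lemma semitotalDomNum_eq_card {V : Type*} {G : SimpleGraph V} [Fintype V] {S : Finset V}
    (hS : IsSemitotalDomSet G ↑S)
    (hmin : ∀ D : Finset V, IsSemitotalDomSet G ↑D → #S ≤ #D) :
    semitotalDomNum G = #S :=
  le_antisymm (Nat.sInf_le ⟨S, hS, rfl⟩)
    (le_csInf ⟨_, S, hS, rfl⟩ fun _ ⟨D, hD, hk⟩ => hk ▸ hmin D hD)

section SingleJump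

variable {G : Type*} [AddCommGroup G] {g : G}

lemma SimpleGraph.circulantGraph_singleton_adj (hg : g ≠ 0) {u v : G} :
    (circulantGraph {g}).Adj u v ↔ u = v + g ∨ v = u + g := by
  simp only [circulantGraph_adj, Set.mem_singleton_iff, sub_eq_iff_eq_add', and_iff_right_iff_imp]
  rintro (rfl | rfl) <;> simpa using hg

variable [DecidableEq G]

def dominator (D : Finset G) (g u : G) : G :=
  if u ∈ D then u else if u + g ∈ D then u + g else u - g

variable {D : Finset G}

lemma dominator_mem (hg : g ≠ 0) (hD : IsDomSet (circulantGraph {g}) ↑D) (u : G) :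
    dominator D g u ∈ D := by
  unfold dominator
  split_ifs with hu hug
  · exact hu
  · exact hug
  · obtain ⟨w, hw, hwu⟩ := hD u hu
    rcases (circulantGraph_singleton_adj hg).mp hwu with rfl | rfl
    · exact absurd hw hug
    · simpa using hw

lemma mem_of_dominator_eq {u d : G} (h : dominator D g u = d) :
    u ∈ ({d - g, d, d + g} : Finset G) := by
  unfold dominator at h
  split_ifs at h <;> subst h <;> simp

lemma dominator_of_mem {u : G} (hu : u ∈ D) : dominator D g u = u := if_pos hu

lemma dominator_of_not_mem_of_add_mem {u : G} (hu : u ∉ D) (hug : u + g ∈ D) :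
    dominator D g u = u + g := by
  rw [dominator, if_neg hu, if_pos hug]

variable [Fintype G]

lemma card_dominator_fiber_le_three (d : G) : #{u | dominator D g u = d} ≤ 3 :=
  (card_le_card fun _ hu => mem_of_dominator_eq (mem_filter.mp hu).2).trans card_le_three

lemma dominator_sub_and_add_of_card_fiber_eq_three {d : G}
    (h3 : #{u | dominator D g u = d} = 3) :
    dominator D g (d - g) = d ∧ dominator D g (d + g) = d := by
  have hfib : ({u | dominator D g u = d} : Finset G) = {d - g, d, d + g} :=
    eq_of_subset_of_card_le (fun _ hu => mem_of_dominator_eq (mem_filter.mp hu).2)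
      (h3 ▸ card_le_three)
  have hsub : d - g ∈ ({u | dominator D g u = d} : Finset G) := by simp [hfib]
  have hadd : d + g ∈ ({u | dominator D g u = d} : Finset G) := by simp [hfib]
  exact ⟨(mem_filter.mp hsub).2, (mem_filter.mp hadd).2⟩

lemma sub_sub_mem_of_card_fiber_eq_three (hg : g + g ≠ 0)
    (hD : IsSemitotalDomSet (circulantGraph {g}) ↑D) {d : G} (hd : d ∈ D)
    (h3 : #{u | dominator D g u = d} = 3) : d - g - g ∈ D := by
  have hg0 : g ≠ 0 := by rintro rfl; simp at hg
  obtain ⟨hsub, hadd⟩ := dominator_sub_and_add_of_card_fiber_eq_three h3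
  have hsubD : d - g ∉ D := fun h => hg0 (by simpa [dominator_of_mem h] using hsub)
  have haddD : d + g ∉ D := fun h => hg0 (by simpa [dominator_of_mem h] using hadd)
  have hadd2D : d + g + g ∉ D := fun h => by
    rw [dominator_of_not_mem_of_add_mem haddD h, add_assoc, add_eq_left] at hadd
    exact hg hadd
  obtain ⟨u, hu, hud, hdist⟩ := hD.2 d hd
  simp only [circulantGraph_singleton_adj hg0] at hdist
  rcases hdist with (rfl | rfl) | ⟨w, huw, rfl | rfl⟩
  · exact absurd hu haddD
  · exact absurd (by simpa using hu) hsubD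
  · rcases huw with rfl | huw
    · exact absurd hu hadd2D
    · exact absurd (add_right_cancel huw).symm hud
  · rcases huw with rfl | rfl
    · exact absurd rfl hud
    · simpa using hu

lemma card_dominator_fiber_sub_sub_le_two (hg : g + g ≠ 0) {d : G}
    (h3 : #{u | dominator D g u = d} = 3) : #{u | dominator D g u = d - g - g} ≤ 2 := by
  have hsub := (dominator_sub_and_add_of_card_fiber_eq_three h3).1
  refine (card_le_card fun u hu => ?_).trans (card_le_two (a := d - g - g - g) (b := d - g - g))
  have hdom := (mem_filter.mp hu).2
  have := mem_of_dominator_eq hdom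
  simp only [mem_insert, mem_singleton] at this ⊢
  rcases this with h | h | rfl
  · exact Or.inl h
  · exact Or.inr h
  · rw [sub_add_cancel, hsub, sub_sub] at hdom
    exact absurd (sub_eq_self.mp hdom.symm) hg

theorem IsSemitotalDomSet.two_mul_card_le_five_mul_card (hg : g + g ≠ 0)
    (hD : IsSemitotalDomSet (circulantGraph {g}) ↑D) :
    2 * Fintype.card G ≤ 5 * #D := by
  have hg0 : g ≠ 0 := by rintro rfl; simp at hg
  rw [← card_univ, card_eq_sum_card_fiberwise fun u _ => dominator_mem hg0 hD.1 u]
  exact two_mul_sum_le_five_mul_card (· - g - g) (fun d _ => card_dominator_fiber_le_three d)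
    (fun d hd h3 => ⟨sub_sub_mem_of_card_fiber_eq_three hg hD hd h3,
      card_dominator_fiber_sub_sub_le_two hg h3⟩)
    ((sub_left_injective.comp sub_left_injective).injOn)

end SingleJump

def zeroTwoMod5 (n : ℕ) : Finset (Fin n) := {i | i.val % 5 = 0 ∨ i.val % 5 = 2}

lemma mem_zeroTwoMod5 {n : ℕ} {i : Fin n} :
    i ∈ zeroTwoMod5 n ↔ i.val % 5 = 0 ∨ i.val % 5 = 2 := by
  simp [zeroTwoMod5]

lemma card_filter_range_mod_five_eq_zero_or_two (n : ℕ) :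
    #{k ∈ range n | k % 5 = 0 ∨ k % 5 = 2} = (2 * n + 4) / 5 := by
  induction n with
  | zero => rfl
  | succ n ih =>
    rw [range_add_one, filter_insert]
    split_ifs with h
    · rw [card_insert_of_notMem (by simp), ih]; omega
    · rw [ih]
      rcases (by omega : n % 5 = 1 ∨ n % 5 = 3 ∨ n % 5 = 4) with h | h | h <;> omega

lemma card_zeroTwoMod5 (n : ℕ) : #(zeroTwoMod5 n) = (2 * n + 4) / 5 := by
  rw [← card_filter_range_mod_five_eq_zero_or_two, ← Nat.Iio_eq_range,
    ← card_map Fin.valEmbedding, zeroTwoMod5, map_filter', Fin.map_valEmbedding_univ]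
  congr 1
  exact filter_congr fun k hk =>
    ⟨fun ⟨_, ha, hak⟩ => hak ▸ ha, fun h => ⟨⟨k, mem_Iio.mp hk⟩, h, rfl⟩⟩

lemma isSemitotalDomSet_zeroTwoMod5 {n : ℕ} (hn : 2 ≤ n) :
    IsSemitotalDomSet (circulantGraph ({1} : Set (Fin (n + 1)))) ↑(zeroTwoMod5 (n + 1)) := by
  have h1 : (1 : Fin (n + 1)) ≠ 0 := by simp [Fin.ext_iff]; omega
  have hadj {u v : Fin (n + 1)} (h : v = u + 1) : (circulantGraph {1}).Adj u v :=
    (circulantGraph_singleton_adj h1).mpr (Or.inr h)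
  simp only [IsSemitotalDomSet, IsDomSet, mem_coe, mem_zeroTwoMod5]
  constructor
  · intro v hv
    by_cases h4 : v.val % 5 = 4
    · refine ⟨v + 1, ?_, (hadj rfl).symm⟩
      simp only [Fin.val_add_one, Fin.ext_iff, Fin.val_last]
      split_ifs <;> omega
    · refine ⟨v - 1, ?_, hadj (sub_add_cancel v 1).symm⟩
      simp only [Fin.coe_sub_one, Fin.ext_iff, Fin.val_zero]
      split_ifs <;> omega
  · intro v hv
    rcases hv with h0 | h2
    · by_cases hl : v = Fin.last n
      · subst hl
        refine ⟨Fin.last n + 1, by simp [Fin.last_add_one], ?_, Or.inl (hadj rfl).symm⟩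
        rw [Fin.last_add_one, Ne, Fin.ext_iff, Fin.val_zero, Fin.val_last]
        omega
      · refine ⟨v + 1 + 1, ?_, ?_, Or.inr ⟨v + 1, (hadj rfl).symm, (hadj rfl).symm⟩⟩ <;>
        simp only [Fin.val_add_one, ne_eq, Fin.ext_iff, Fin.val_last] at hl ⊢ <;>
        split_ifs <;> omega
    · have hv0 : v ≠ 0 := by rw [Ne, Fin.ext_iff, Fin.val_zero]; omega
      have hv1 : v - 1 ≠ 0 := by
        rw [Ne, Fin.ext_iff, Fin.val_zero, Fin.val_sub_one_of_ne_zero hv0]; omega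
      refine ⟨v - 1 - 1, ?_, ?_, Or.inr ⟨v - 1, hadj (sub_add_cancel _ 1).symm,
        hadj (sub_add_cancel v 1).symm⟩⟩ <;>
        simp only [ne_eq, Fin.ext_iff, Fin.val_sub_one_of_ne_zero hv0,
          Fin.val_sub_one_of_ne_zero hv1] <;> omega

/-- For every integer `n ≥ 3`, the semitotal domination number of the cycle `Cₙ` on `n`
vertices equals `⌈2n/5⌉` (written as `(2 * n + 4) / 5` using natural division). -/
theorem semitotalDomNum_cycleGraph (n : ℕ) (hn : 3 ≤ n) :
    semitotalDomNum (SimpleGraph.cycleGraph n) = (2 * n + 4) / 5 := by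
  obtain ⟨n, rfl⟩ : ∃ m, n = m + 1 := ⟨n - 1, by omega⟩
  have hS := isSemitotalDomSet_zeroTwoMod5 (n := n) (by omega)
  have h2 : (1 : Fin (n + 1)) + 1 ≠ 0 := by
    simp [Fin.ext_iff, Fin.val_add, Nat.mod_eq_of_lt (show 2 < n + 1 by omega)]
  rw [cycleGraph_eq_circulantGraph, semitotalDomNum_eq_card hS fun D hD => ?_, card_zeroTwoMod5]
  have h5 := hD.two_mul_card_le_five_mul_card h2
  rw [Fintype.card_fin] at h5
  rw [card_zeroTwoMod5]
  omega
end

section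
/- If G_1 and G_2 are two graphs (with no isolated vertices), then γ_t2(G_1 ∘ G_2) ≤ γ_t2(G_1) + γ_t2(G_2) · (|V(G_1)| − γ_t2(G_1)), where G_1 ∘ G_2 is the corona product. -/
open SimpleGraph

/-- The corona product `G₁ ∘ G₂`: one copy of `G₁`, and for each vertex `i` of `G₁` a copy of
`G₂` whose vertices are all joined to `i`. -/
def coronaProd {α β : Type*} (G₁ : SimpleGraph α) (G₂ : SimpleGraph β) :
    SimpleGraph (α ⊕ α × β) where
  Adj x y :=
    match x, y with
    | Sum.inl u, Sum.inl v => G₁.Adj u v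
    | Sum.inl u, Sum.inr p => u = p.1
    | Sum.inr p, Sum.inl v => p.1 = v
    | Sum.inr p, Sum.inr q => p.1 = q.1 ∧ G₂.Adj p.2 q.2
  symm := by
    constructor
    rintro (u | p) (v | q) h
    · exact h.symm
    · exact h.symm
    · exact h.symm
    · exact ⟨h.1.symm, h.2.symm⟩
  loopless := by
    constructor
    rintro (u | p) h
    · exact G₁.irrefl h
    · exact G₂.irrefl h.2

/-!
Take minimum semitotal dominating sets `D₁` of `G₁` and `D₂` of `G₂`, and in the corona product
choose `D₁` itself together with the copy of `D₂` in every copy of `G₂` hanging at a vertex outside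
`D₁`. A vertex of `G₁` is dominated inside `G₁`, a vertex in a copy at a vertex of `D₁` by that hub,
and any other vertex inside its own copy of `G₂`. Two vertices of the same copy of `G₂` are always
at distance at most 2 through the hub, so semitotality transfers as well.
-/

section SemitotalDomNum

variable {V : Type*} {G : SimpleGraph V}

lemma isSemitotalDomSet_univ (h : ∀ v, ∃ u, G.Adj u v) : IsSemitotalDomSet G Set.univ := by
  refine ⟨fun v hv => absurd (Set.mem_univ v) hv, fun v _ => ?_⟩
  obtain ⟨u, hu⟩ := h v
  exact ⟨u, Set.mem_univ u, hu.ne, Or.inl hu⟩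

variable [Fintype V]

lemma semitotalDomNum_le_card {D : Finset V} (hD : IsSemitotalDomSet G D) :
    semitotalDomNum G ≤ D.card :=
  Nat.sInf_le ⟨D, hD, rfl⟩

lemma exists_isSemitotalDomSet_card_eq_semitotalDomNum (h : ∀ v, ∃ u, G.Adj u v) :
    ∃ D : Finset V, IsSemitotalDomSet G D ∧ D.card = semitotalDomNum G :=
  Nat.sInf_mem (s := {k | ∃ D : Finset V, IsSemitotalDomSet G ↑D ∧ D.card = k})
    ⟨_, Finset.univ, by simpa using isSemitotalDomSet_univ h, rfl⟩

end SemitotalDomNum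

section Corona

variable {α β : Type*} {G₁ : SimpleGraph α} {G₂ : SimpleGraph β}

def coronaSet (D₁ : Set α) (D₂ : Set β) : Set (α ⊕ α × β) :=
  Sum.inl '' D₁ ∪ Sum.inr '' (D₁ᶜ ×ˢ D₂)

variable {D₁ : Set α} {D₂ : Set β}

@[simp]
lemma inl_mem_coronaSet {v : α} : Sum.inl v ∈ coronaSet D₁ D₂ ↔ v ∈ D₁ := by
  simp [coronaSet]

@[simp]
lemma inr_mem_coronaSet {p : α × β} : Sum.inr p ∈ coronaSet D₁ D₂ ↔ p.1 ∉ D₁ ∧ p.2 ∈ D₂ := by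
  simp [coronaSet]

lemma IsDomSet.coronaSet (h₁ : IsDomSet G₁ D₁) (h₂ : IsDomSet G₂ D₂) :
    IsDomSet (coronaProd G₁ G₂) (coronaSet D₁ D₂) := by
  rintro (v | ⟨a, b⟩) hx
  · obtain ⟨u, hu, huv⟩ := h₁ v (by simpa using hx)
    exact ⟨.inl u, by simpa using hu, huv⟩
  · by_cases ha : a ∈ D₁
    · exact ⟨.inl a, by simpa using ha, rfl⟩
    · obtain ⟨u, hu, hub⟩ := h₂ b fun hb => hx (by simp [ha, hb])
      exact ⟨.inr (a, u), by simp [ha, hu], rfl, hub⟩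

lemma IsSemitotalDomSet.coronaSet (h₁ : IsSemitotalDomSet G₁ D₁)
    (h₂ : IsSemitotalDomSet G₂ D₂) :
    IsSemitotalDomSet (coronaProd G₁ G₂) (coronaSet D₁ D₂) := by
  refine ⟨h₁.1.coronaSet h₂.1, ?_⟩
  rintro (v | ⟨a, b⟩) hx
  · obtain ⟨u, hu, huv, hdist⟩ := h₁.2 v (by simpa using hx)
    refine ⟨.inl u, by simpa using hu, by simpa using huv, ?_⟩
    rcases hdist with hadj | ⟨w, huw, hwv⟩
    · exact Or.inl hadj
    · exact Or.inr ⟨.inl w, huw, hwv⟩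
  · obtain ⟨ha, hb⟩ := inr_mem_coronaSet.mp hx
    obtain ⟨u, hu, hub, -⟩ := h₂.2 b hb
    exact ⟨.inr (a, u), by simp [ha, hu], by simpa using hub, Or.inr ⟨.inl a, rfl, rfl⟩⟩

lemma Finset.coe_disjSum_compl_product [Fintype α] [DecidableEq α] (D₁ : Finset α)
    (D₂ : Finset β) : (↑(D₁.disjSum (D₁ᶜ ×ˢ D₂)) : Set (α ⊕ α × β)) = coronaSet ↑D₁ ↑D₂ := by
  ext (v | p) <;> simp

end Corona

/-- For graphs `G₁, G₂` with no isolated vertices,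
`γ_t2(G₁ ∘ G₂) ≤ γ_t2(G₁) + γ_t2(G₂) · (|V(G₁)| − γ_t2(G₁))`. -/
theorem semitotalDomNum_corona_le {α β : Type*} [Fintype α] [Fintype β]
    (G₁ : SimpleGraph α) (G₂ : SimpleGraph β)
    (h₁ : ∀ v, ∃ u, G₁.Adj u v) (h₂ : ∀ v, ∃ u, G₂.Adj u v) :
    semitotalDomNum (coronaProd G₁ G₂) ≤
      semitotalDomNum G₁ + semitotalDomNum G₂ * (Fintype.card α - semitotalDomNum G₁) := by
  classical
  obtain ⟨D₁, hD₁, hc₁⟩ := exists_isSemitotalDomSet_card_eq_semitotalDomNum h₁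
  obtain ⟨D₂, hD₂, hc₂⟩ := exists_isSemitotalDomSet_card_eq_semitotalDomNum h₂
  have hD : IsSemitotalDomSet (coronaProd G₁ G₂) ↑(D₁.disjSum (D₁ᶜ ×ˢ D₂)) := by
    rw [Finset.coe_disjSum_compl_product]
    exact hD₁.coronaSet hD₂
  calc semitotalDomNum (coronaProd G₁ G₂) ≤ (D₁.disjSum (D₁ᶜ ×ˢ D₂)).card :=
        semitotalDomNum_le_card hD
    _ = _ := by
      rw [Finset.card_disjSum, Finset.card_product, Finset.card_compl, hc₁, hc₂, mul_comm]
end
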